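/- arXiv:1903.01687 — 3 statements merged into one kernel-verified Lean document; each statement's English description precedes it below -/
import Mathlib

section
/- Azuma–Hoeffding inequality for sub-Gaussian martingale difference sequences: let {ε_t}_{t∈ℕ} be a real-valued martingale difference sequence adapted to a filtration {F_t}_{t≥0} (i.e., E[ε_t | F_{t-1}] = 0 a.s. for each t), and suppose for each t there is a constant d_t > 0 with E[exp(ε_t²/d_t²) | F_{t-1}] ≤ e a.s. Then for every p > 0 and T ∈ ℕ, Pr{ Σ_{t=1}^{T-1} ε_t > p (Σ_{t=1}^{T-1} d_t²)^{1/2} } ≤ exp(-p²/4). -/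
/-!
Conditionally on `F (t - 1)`, each `ε t` has moment generating function at most
`exp (l ^ 2 * d t ^ 2)`. For `l ^ 2 * d t ^ 2 ≤ 1` this follows from `e ^ u ≤ u + e ^ (u ^ 2)` and
`E[ε t | F (t - 1)] = 0`; for `l ^ 2 * d t ^ 2 > 1` from `l x ≤ (l ^ 2 d ^ 2 + x ^ 2 / d ^ 2) / 2`.
In both cases what remains is `E[exp (θ ε ^ 2 / d ^ 2) | F (t - 1)]` with `θ ≤ 1`, which is at most
`e ^ θ` by the tangent line of the concave map `y ↦ y ^ θ` at `y = e` (a conditional Jensen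
inequality). Peeling off one increment at a time with the tower property, the partial sum is
sub-Gaussian with variance proxy `2 ∑ d t ^ 2`, and the Chernoff bound at level
`p (∑ d t ^ 2) ^ (1 / 2)` is `exp (-p ^ 2 / 4)`.
-/

open MeasureTheory ENNReal Real ProbabilityTheory

open scoped NNReal

lemma exp_le_add_exp_sq (u : ℝ) : exp u ≤ u + exp (u ^ 2) := by
  have h_sq : 1 + u ^ 2 ≤ exp (u ^ 2) := by linarith [add_one_le_exp (u ^ 2)]
  rcases le_or_gt |u| 1 with hu | hu
  · linarith [(abs_le.1 (abs_exp_sub_one_sub_id_le hu)).2]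
  rcases lt_abs.1 hu with hu | hu
  · linarith [exp_le_exp.2 (show u ≤ u ^ 2 by nlinarith)]
  · nlinarith [exp_le_one_iff.2 (show u ≤ 0 by linarith)]

lemma exp_mul_le_tangent {θ : ℝ} (hθ₀ : 0 ≤ θ) (hθ₁ : θ ≤ 1) (c z : ℝ) :
    exp (θ * z) ≤ θ * exp ((θ - 1) * c) * exp z + (1 - θ) * exp (θ * c) := by
  have h_convex : exp (θ * z + (1 - θ) * c) ≤ θ * exp z + (1 - θ) * exp c :=
    convexOn_exp.2 (Set.mem_univ z) (Set.mem_univ c) hθ₀ (by linarith) (by ring)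
  calc exp (θ * z) = exp (θ * z + (1 - θ) * c) * exp ((θ - 1) * c) := by
        rw [← exp_add]; ring_nf
    _ ≤ (θ * exp z + (1 - θ) * exp c) * exp ((θ - 1) * c) := by gcongr
    _ = θ * exp ((θ - 1) * c) * exp z + (1 - θ) * (exp c * exp ((θ - 1) * c)) := by ring
    _ = _ := by rw [← exp_add]; ring_nf

section

variable {Ω : Type*} {m m0 : MeasurableSpace Ω} {μ : Measure Ω}

lemma integrable_exp_of_exp_le {f g : Ω → ℝ} (hf : AEStronglyMeasurable f μ) (hg : Integrable g μ)
    (hfg : ∀ ω, exp (f ω) ≤ g ω) : Integrable (fun ω => exp (f ω)) μ :=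
  hg.mono' (continuous_exp.comp_aestronglyMeasurable hf)
    (.of_forall fun ω => by simpa [abs_of_pos (exp_pos _)] using hfg ω)

lemma condExp_exp_mul_le [IsFiniteMeasure μ] (hm : m ≤ m0) {Z : Ω → ℝ} {c θ : ℝ}
    (hZ : AEStronglyMeasurable Z μ) (hZ_int : Integrable (fun ω => exp (Z ω)) μ)
    (hZ_le : ∀ᵐ ω ∂μ, μ[fun ω => exp (Z ω) | m] ω ≤ exp c) (hθ₀ : 0 ≤ θ) (hθ₁ : θ ≤ 1) :
    Integrable (fun ω => exp (θ * Z ω)) μ ∧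
      ∀ᵐ ω ∂μ, μ[fun ω => exp (θ * Z ω) | m] ω ≤ exp (θ * c) := by
  set a := θ * exp ((θ - 1) * c)
  set b := (1 - θ) * exp (θ * c)
  set g : Ω → ℝ := (a • fun ω => exp (Z ω)) + fun _ => b
  have h_le : ∀ ω, exp (θ * Z ω) ≤ g ω := fun ω => exp_mul_le_tangent hθ₀ hθ₁ c (Z ω)
  have hg_int : Integrable g μ := (hZ_int.smul a).add (integrable_const b)
  have h_int := integrable_exp_of_exp_le (hZ.const_mul θ) hg_int h_le
  refine ⟨h_int, ?_⟩
  filter_upwards [condExp_mono (m := m) h_int hg_int (.of_forall h_le),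
    condExp_add (hZ_int.smul a) (integrable_const b) m,
    condExp_smul (μ := μ) a (fun ω => exp (Z ω)) m, hZ_le]
    with ω h_mono h_add h_smul hω
  rw [h_add, Pi.add_apply, h_smul, condExp_const hm] at h_mono
  calc _ ≤ a * μ[fun ω => exp (Z ω) | m] ω + b := h_mono
    _ ≤ a * exp c + b := by gcongr
    _ = exp (θ * c) := by
      simp only [a, b, mul_assoc, ← exp_add]
      ring_nf

lemma condExp_exp_mul_le_of_condExp_exp_sq_le [IsFiniteMeasure μ] (hm : m ≤ m0)
    {X : Ω → ℝ} {δ : ℝ} (hδ : 0 < δ) (hX : Integrable X μ) (hX_mean : μ[X | m] =ᵐ[μ] 0)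
    (hX_sq_int : Integrable (fun ω => exp (X ω ^ 2 / δ ^ 2)) μ)
    (hX_sq : ∀ᵐ ω ∂μ, μ[fun ω => exp (X ω ^ 2 / δ ^ 2) | m] ω ≤ exp 1) (l : ℝ) :
    Integrable (fun ω => exp (l * X ω)) μ ∧
      ∀ᵐ ω ∂μ, μ[fun ω => exp (l * X ω) | m] ω ≤ exp (l ^ 2 * δ ^ 2) := by
  have hZ : AEStronglyMeasurable (fun ω => X ω ^ 2 / δ ^ 2) μ := by fun_prop
  have hlX : AEStronglyMeasurable (fun ω => l * X ω) μ := by fun_prop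
  set θ := l ^ 2 * δ ^ 2
  rcases le_or_gt θ 1 with hθ_le | hθ_gt
  · obtain ⟨hZθ_int, hZθ⟩ :=
      condExp_exp_mul_le hm hZ hX_sq_int hX_sq (by positivity) hθ_le
    set g : Ω → ℝ := (l • X) + fun ω => exp (θ * (X ω ^ 2 / δ ^ 2))
    have h_le : ∀ ω, exp (l * X ω) ≤ g ω := fun ω => by
      have h_sq : (l * X ω) ^ 2 = θ * (X ω ^ 2 / δ ^ 2) := by field_simp [θ]; ring
      simpa [g, h_sq] using exp_le_add_exp_sq (l * X ω)
    have hg_int : Integrable g μ := (hX.smul l).add hZθ_int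
    have h_int := integrable_exp_of_exp_le hlX hg_int h_le
    refine ⟨h_int, ?_⟩
    filter_upwards [condExp_mono (m := m) h_int hg_int (.of_forall h_le),
      condExp_add (hX.smul l) hZθ_int m, condExp_smul (μ := μ) l X m, hX_mean, hZθ]
      with ω h_mono h_add h_smul h_mean hω
    rw [h_add, Pi.add_apply, h_smul, Pi.smul_apply, h_mean, Pi.zero_apply, smul_zero,
      zero_add] at h_mono
    rw [mul_one] at hω
    exact h_mono.trans hω
  · obtain ⟨hZθ_int, hZθ⟩ :=
      condExp_exp_mul_le hm hZ hX_sq_int hX_sq (θ := 1 / 2) (by norm_num) (by norm_num)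
    set g : Ω → ℝ := exp (θ / 2) • fun ω => exp (1 / 2 * (X ω ^ 2 / δ ^ 2))
    have h_le : ∀ ω, exp (l * X ω) ≤ g ω := fun ω => by
      have h_amgm : l * X ω ≤ θ / 2 + 1 / 2 * (X ω ^ 2 / δ ^ 2) := by
        have : l * X ω = (l * δ) * (X ω / δ) := by field_simp
        rw [this]
        nlinarith [sq_nonneg (l * δ - X ω / δ), div_pow (X ω) δ 2]
      simpa [g, ← exp_add] using exp_le_exp.2 h_amgm
    have hg_int : Integrable g μ := hZθ_int.smul _
    have h_int := integrable_exp_of_exp_le hlX hg_int h_le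
    refine ⟨h_int, ?_⟩
    filter_upwards [condExp_mono (m := m) h_int hg_int (.of_forall h_le),
      condExp_smul (μ := μ) (exp (θ / 2)) (fun ω => exp (1 / 2 * (X ω ^ 2 / δ ^ 2))) m, hZθ]
      with ω h_mono h_smul hω
    rw [h_smul, Pi.smul_apply, smul_eq_mul] at h_mono
    calc _ ≤ exp (θ / 2) * exp (1 / 2 * 1) := h_mono.trans (by gcongr)
      _ ≤ exp θ := by rw [← exp_add]; gcongr; linarith

lemma ProbabilityTheory.HasSubgaussianMGF.add_of_condExp_exp_mul_le [IsFiniteMeasure μ]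
    (hm : m ≤ m0) {X Y : Ω → ℝ} {cX cY : ℝ≥0} (hX_meas : StronglyMeasurable[m] X)
    (hX : HasSubgaussianMGF X cX μ) (hY_int : ∀ t, Integrable (fun ω => exp (t * Y ω)) μ)
    (hY : ∀ t, ∀ᵐ ω ∂μ, μ[fun ω => exp (t * Y ω) | m] ω ≤ exp (cY * t ^ 2 / 2)) :
    HasSubgaussianMGF (fun ω => X ω + Y ω) (cX + cY) μ := by
  have h_prod (t : ℝ) : (fun ω => exp (t * (X ω + Y ω)))
      = (fun ω => exp (t * X ω)) * fun ω => exp (t * Y ω) := by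
    ext ω; simp [mul_add, exp_add]
  have h_int (t : ℝ) : Integrable (fun ω => exp (t * (X ω + Y ω))) μ := by
    have hY_memLp : MemLp (fun ω => exp (t * Y ω)) 2 μ := by
      refine (memLp_two_iff_integrable_sq (hY_int t).1).2 ?_
      simpa [← exp_nat_mul, ← mul_assoc] using hY_int (2 * t)
    have hX_memLp : MemLp (fun ω => exp (t * X ω)) 2 μ := by
      simpa using hX.memLp_exp_mul t 2
    rw [h_prod]
    exact hX_memLp.integrable_mul hY_memLp
  refine ⟨h_int, fun t => ?_⟩
  have hX_exp_meas : StronglyMeasurable[m] fun ω => exp (t * X ω) :=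
    continuous_exp.comp_stronglyMeasurable (hX_meas.const_mul t)
  have h_pull := condExp_mul_of_stronglyMeasurable_left hX_exp_meas
    (h_prod t ▸ h_int t) (hY_int t)
  calc mgf (fun ω => X ω + Y ω) μ t
      = ∫ ω, μ[(fun ω => exp (t * X ω)) * fun ω => exp (t * Y ω) | m] ω ∂μ := by
        rw [integral_condExp hm, ← h_prod]; rfl
    _ = ∫ ω, exp (t * X ω) * μ[fun ω => exp (t * Y ω) | m] ω ∂μ := integral_congr_ae h_pull
    _ ≤ ∫ ω, exp (t * X ω) * exp (cY * t ^ 2 / 2) ∂μ := by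
        refine integral_mono_ae (integrable_condExp.congr h_pull)
          ((hX.integrable_exp_mul t).mul_const _) ?_
        filter_upwards [hY t] with ω hω
        gcongr
    _ = mgf X μ t * exp (cY * t ^ 2 / 2) := integral_mul_const _ _
    _ ≤ exp (cX * t ^ 2 / 2) * exp (cY * t ^ 2 / 2) := by gcongr; exact hX.mgf_le t
    _ = exp (↑(cX + cY) * t ^ 2 / 2) := by rw [← exp_add]; push_cast; ring_nf

lemma hasSubgaussianMGF_sum_Icc_of_condExp_le [IsProbabilityMeasure μ] (F : Filtration ℕ m0)
    {ε : ℕ → Ω → ℝ} {c : ℕ → ℝ≥0} (hadapted : ∀ t, 1 ≤ t → StronglyMeasurable[F t] (ε t))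
    (h_int : ∀ t, 1 ≤ t → ∀ l, Integrable (fun ω => exp (l * ε t ω)) μ)
    (h_le : ∀ t, 1 ≤ t → ∀ l,
      ∀ᵐ ω ∂μ, μ[fun ω => exp (l * ε t ω) | F (t - 1)] ω ≤ exp (c t * l ^ 2 / 2)) (n : ℕ) :
    HasSubgaussianMGF (fun ω => ∑ t ∈ Finset.Icc 1 n, ε t ω) (∑ t ∈ Finset.Icc 1 n, c t) μ := by
  induction n with
  | zero => simp
  | succ n ih =>
    simp_rw [Finset.sum_Icc_succ_top (Nat.le_add_left 1 n)]
    refine ih.add_of_condExp_exp_mul_le (F.le n) ?_ (h_int (n + 1) (by omega))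
      (h_le (n + 1) (by omega))
    refine Finset.stronglyMeasurable_fun_sum _ fun t ht => ?_
    exact (hadapted t (Finset.mem_Icc.1 ht).1).mono (F.mono (Finset.mem_Icc.1 ht).2)

lemma ProbabilityTheory.HasSubgaussianMGF.measure_mul_sqrt_lt_le [IsFiniteMeasure μ]
    {X : Ω → ℝ} {v : ℝ≥0} (h : HasSubgaussianMGF X (2 * v) μ) {p : ℝ} (hp : 0 ≤ p) :
    μ {ω | p * √v < X ω} ≤ ENNReal.ofReal (exp (-p ^ 2 / 4)) := by
  rcases eq_zero_or_pos v with rfl | hv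
  · have hX_zero : X =ᵐ[μ] 0 := ae_eq_zero_of_hasSubgaussianMGF_zero (by simpa using h)
    refine (measure_mono_null (fun ω hω => ?_) (ae_iff.1 hX_zero)).trans_le zero_le
    simp only [Set.mem_ofPred_eq, NNReal.coe_zero, Real.sqrt_zero, mul_zero] at hω
    exact hω.ne'
  calc μ {ω | p * √v < X ω} ≤ μ {ω | p * √v ≤ X ω} :=
        measure_mono (Set.ofPred_subset_ofPred.2 fun _ => le_of_lt)
    _ = ENNReal.ofReal (μ.real {ω | p * √v ≤ X ω}) :=
        (ofReal_measureReal (measure_ne_top _ _)).symm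
    _ ≤ ENNReal.ofReal (exp (-(p * √v) ^ 2 / (2 * ↑(2 * v)))) :=
        ENNReal.ofReal_le_ofReal (h.measure_ge_le (by positivity))
    _ = ENNReal.ofReal (exp (-p ^ 2 / 4)) := by
        rw [mul_pow, Real.sq_sqrt v.coe_nonneg]
        congr 2
        push_cast
        field_simp
        ring

end

/-- Azuma–Hoeffding inequality for sub-Gaussian martingale difference sequences.
If `{ε_t}` is a real-valued martingale difference sequence adapted to the filtration `{F_t}`
(`E[ε_t | F_{t-1}] = 0` a.s.) and `E[exp(ε_t² / d_t²) | F_{t-1}] ≤ e` a.s. for constants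
`d_t > 0`, then for every `p > 0` and `T ∈ ℕ`,
`Pr{ Σ_{t=1}^{T-1} ε_t > p (Σ_{t=1}^{T-1} d_t²)^{1/2} } ≤ exp(-p²/4)`. -/
theorem azuma_hoeffding_subgaussian_mds
    {Ω : Type*} {m0 : MeasurableSpace Ω} (μ : Measure Ω) [IsProbabilityMeasure μ]
    (F : Filtration ℕ m0)
    (ε : ℕ → Ω → ℝ) (d : ℕ → ℝ)
    (hd : ∀ t, 1 ≤ t → 0 < d t)
    (hadapted : ∀ t, 1 ≤ t → StronglyMeasurable[F t] (ε t))
    (hint : ∀ t, 1 ≤ t → Integrable (ε t) μ)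
    (hmds : ∀ t, 1 ≤ t → μ[ε t | F (t - 1)] =ᵐ[μ] 0)
    (hexp_int : ∀ t, 1 ≤ t → Integrable (fun ω => Real.exp ((ε t ω) ^ 2 / (d t) ^ 2)) μ)
    (hsubg : ∀ t, 1 ≤ t →
      ∀ᵐ ω ∂μ, (μ[fun ω' => Real.exp ((ε t ω') ^ 2 / (d t) ^ 2) | F (t - 1)]) ω ≤ Real.exp 1) :
    ∀ p : ℝ, 0 < p → ∀ T : ℕ,
      μ {ω | p * Real.sqrt (∑ t ∈ Finset.Icc 1 (T - 1), (d t) ^ 2)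
              < ∑ t ∈ Finset.Icc 1 (T - 1), ε t ω}
        ≤ ENNReal.ofReal (Real.exp (-(p ^ 2) / 4)) := by
  intro p hp T
  have h_mgf (t : ℕ) (ht : 1 ≤ t) (l : ℝ) :=
    condExp_exp_mul_le_of_condExp_exp_sq_le (F.le (t - 1)) (hd t ht) (hint t ht) (hmds t ht)
      (hexp_int t ht) (hsubg t ht) l
  let c (t : ℕ) : ℝ≥0 := ⟨d t ^ 2, sq_nonneg _⟩
  have hc (t : ℕ) : (c t : ℝ) = d t ^ 2 := rfl
  have h_sum := hasSubgaussianMGF_sum_Icc_of_condExp_le F (c := fun t => 2 * c t) hadapted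
    (fun t ht l => (h_mgf t ht l).1)
    (fun t ht l => by convert (h_mgf t ht l).2 using 4; push_cast [hc]; ring) (T - 1)
  rw [← Finset.mul_sum] at h_sum
  simpa [hc, neg_div] using h_sum.measure_mul_sqrt_lt_le hp.le
end

section
/- Let {δ_t}_{t=1}^{T-1} be random vectors in a finite-dimensional real normed space, with δ_t measurable with respect to F_t, and suppose there is σ > 0 such that E[exp(‖δ_t‖²/σ²) | F_{t-1}] ≤ e a.s. for each t. Let w_1,…,w_{T-1} > 0 and C := Σ_{t=1}^{T-1} w_t. Then for every p > 0, Pr{ Σ_{t=1}^{T-1} w_t ‖δ_t‖² > (1+p) C σ² } ≤ exp(-p). -/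
open MeasureTheory ENNReal

/-! Weighted Jensen for `exp` bounds `exp (∑ w_t ‖δ_t‖² / (C σ²))` by the weighted average of the
`exp (‖δ_t‖² / σ²)`, whose expectation is at most `e` by the tower property; Markov's inequality
at level `exp (1 + p)` then gives the tail `e · exp (-(1 + p)) = exp (-p)`. -/

section

variable {Ω ι : Type*} {m m0 : MeasurableSpace Ω} {μ : Measure Ω}

theorem integral_le_of_ae_condExp_le [IsProbabilityMeasure μ] (hm : m ≤ m0) {f : Ω → ℝ} {c : ℝ}
    (hf : ∀ᵐ ω ∂μ, (μ[f | m]) ω ≤ c) : ∫ ω, f ω ∂μ ≤ c := by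
  rw [← integral_condExp hm]
  simpa using integral_mono_ae integrable_condExp (integrable_const c) hf

theorem integrable_centerMass {s : Finset ι} {w : ι → ℝ} {f : ι → Ω → ℝ}
    (hf : ∀ i ∈ s, Integrable (f i) μ) :
    Integrable (fun ω => s.centerMass w fun i => f i ω) μ :=
  (integrable_finsetSum s fun i hi => (hf i hi).const_mul (w i)).const_mul _

theorem integral_centerMass {s : Finset ι} {w : ι → ℝ} {f : ι → Ω → ℝ}
    (hf : ∀ i ∈ s, Integrable (f i) μ) :
    ∫ ω, s.centerMass w (fun i => f i ω) ∂μ = s.centerMass w fun i => ∫ ω, f i ω ∂μ := by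
  simp only [Finset.centerMass, smul_eq_mul]
  rw [integral_const_mul, integral_finsetSum s fun i hi => (hf i hi).const_mul (w i)]
  simp only [integral_const_mul]

/-- Markov's inequality for `exp ∘ Y` through an integrable majorant `M`, so that `Y` need not be
measurable. -/
theorem measure_lt_le_exp_neg_mul_integral [IsFiniteMeasure μ] {Y M : Ω → ℝ}
    (hM : Integrable M μ) (hYM : ∀ ω, Real.exp (Y ω) ≤ M ω) (a : ℝ) :
    μ {ω | a < Y ω} ≤ ENNReal.ofReal (Real.exp (-a) * ∫ ω, M ω ∂μ) := by
  have hsub : {ω | a < Y ω} ⊆ {ω | Real.exp a ≤ M ω} := fun ω hω =>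
    (Real.exp_le_exp.mpr (le_of_lt hω)).trans (hYM ω)
  have hmarkov := mul_meas_ge_le_integral_of_nonneg
    (Filter.Eventually.of_forall fun ω => (Real.exp_pos _).le.trans (hYM ω)) hM (Real.exp a)
  calc μ {ω | a < Y ω} ≤ μ {ω | Real.exp a ≤ M ω} := measure_mono hsub
    _ = ENNReal.ofReal (μ.real {ω | Real.exp a ≤ M ω}) := (ofReal_measureReal (measure_ne_top μ _)).symm
    _ ≤ ENNReal.ofReal (Real.exp (-a) * ∫ ω, M ω ∂μ) := by
      refine ENNReal.ofReal_le_ofReal ?_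
      rw [Real.exp_neg, ← div_eq_inv_mul, le_div_iff₀ (Real.exp_pos a), mul_comm]
      exact hmarkov

end

theorem weighted_subgaussian_norm_sq_tail_bound_general
    {Ω : Type*} {m0 : MeasurableSpace Ω} (μ : Measure Ω) [IsProbabilityMeasure μ]
    (F : Filtration ℕ m0)
    {E : Type*} [NormedAddCommGroup E]
    (T : ℕ) (δ : ℕ → Ω → E) (σ : ℝ) (hσ : 0 < σ)
    (w : ℕ → ℝ) (hw : ∀ t ∈ Finset.Icc 1 (T - 1), 0 < w t)
    (hexp_int : ∀ t ∈ Finset.Icc 1 (T - 1),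
      Integrable (fun ω => Real.exp (‖δ t ω‖ ^ 2 / σ ^ 2)) μ)
    (hsubg : ∀ t ∈ Finset.Icc 1 (T - 1),
      ∀ᵐ ω ∂μ, (μ[fun ω' => Real.exp (‖δ t ω'‖ ^ 2 / σ ^ 2) | F (t - 1)]) ω ≤ Real.exp 1) :
    ∀ p : ℝ, 0 < p →
      μ {ω | (1 + p) * (∑ t ∈ Finset.Icc 1 (T - 1), w t) * σ ^ 2
              < ∑ t ∈ Finset.Icc 1 (T - 1), w t * ‖δ t ω‖ ^ 2}
        ≤ ENNReal.ofReal (Real.exp (-p)) := by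
  intro p _
  set s := Finset.Icc 1 (T - 1)
  rcases s.eq_empty_or_nonempty with hs | hs
  · simp [hs]
  have hC : 0 < ∑ t ∈ s, w t := Finset.sum_pos hw hs
  have hw₀ : ∀ t ∈ s, 0 ≤ w t := fun t ht => (hw t ht).le
  set M : Ω → ℝ := fun ω => s.centerMass w fun t => Real.exp (‖δ t ω‖ ^ 2 / σ ^ 2)
  have hM_le : ∫ ω, M ω ∂μ ≤ Real.exp 1 := by
    rw [integral_centerMass hexp_int]
    exact (convex_Iic _).centerMass_mem hw₀ hC fun t ht =>
      Set.mem_Iic.mpr (integral_le_of_ae_condExp_le (F.le _) (hsubg t ht))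
  have hJensen (ω : Ω) : Real.exp (s.centerMass w fun t => ‖δ t ω‖ ^ 2 / σ ^ 2) ≤ M ω :=
    convexOn_exp.map_centerMass_le hw₀ hC fun _ _ => Set.mem_univ _
  have hcenterMass (ω : Ω) : (s.centerMass w fun t => ‖δ t ω‖ ^ 2 / σ ^ 2)
      = (∑ t ∈ s, w t * ‖δ t ω‖ ^ 2) / ((∑ t ∈ s, w t) * σ ^ 2) := by
    simp only [Finset.centerMass, smul_eq_mul, mul_div_assoc', ← Finset.sum_div]
    field_simp
  calc μ {ω | (1 + p) * (∑ t ∈ s, w t) * σ ^ 2 < ∑ t ∈ s, w t * ‖δ t ω‖ ^ 2}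
      ≤ μ {ω | 1 + p < s.centerMass w fun t => ‖δ t ω‖ ^ 2 / σ ^ 2} := by
        refine measure_mono fun ω hω => ?_
        rw [Set.mem_ofPred_eq, hcenterMass, lt_div_iff₀ (by positivity)]
        linarith [hω.out]
    _ ≤ ENNReal.ofReal (Real.exp (-(1 + p)) * ∫ ω, M ω ∂μ) :=
        measure_lt_le_exp_neg_mul_integral (integrable_centerMass hexp_int) hJensen _
    _ ≤ ENNReal.ofReal (Real.exp (-p)) := by
        refine ENNReal.ofReal_le_ofReal ?_
        calc Real.exp (-(1 + p)) * ∫ ω, M ω ∂μ ≤ Real.exp (-(1 + p)) * Real.exp 1 := by gcongr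
          _ = Real.exp (-p) := by rw [← Real.exp_add]; ring_nf

/-- Let `{δ_t}_{t=1}^{T-1}` be random vectors in a finite-dimensional real normed
space, `δ_t` measurable w.r.t. `F_t`, with `E[exp(‖δ_t‖²/σ²) | F_{t-1}] ≤ e` a.s. for some
`σ > 0`. For positive weights `w_t` with `C = Σ_{t=1}^{T-1} w_t`, for every `p > 0`,
`Pr{ Σ_{t=1}^{T-1} w_t ‖δ_t‖² > (1+p) C σ² } ≤ exp(-p)`. -/
theorem weighted_subgaussian_norm_sq_tail_bound
    {Ω : Type*} {m0 : MeasurableSpace Ω} (μ : Measure Ω) [IsProbabilityMeasure μ]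
    (F : Filtration ℕ m0)
    {E : Type*} [NormedAddCommGroup E] [NormedSpace ℝ E] [FiniteDimensional ℝ E]
    (T : ℕ) (δ : ℕ → Ω → E) (σ : ℝ) (hσ : 0 < σ)
    (w : ℕ → ℝ) (hw : ∀ t ∈ Finset.Icc 1 (T - 1), 0 < w t)
    (hadapted : ∀ t ∈ Finset.Icc 1 (T - 1), StronglyMeasurable[F t] (δ t))
    (hexp_int : ∀ t ∈ Finset.Icc 1 (T - 1),
      Integrable (fun ω => Real.exp (‖δ t ω‖ ^ 2 / σ ^ 2)) μ)
    (hsubg : ∀ t ∈ Finset.Icc 1 (T - 1),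
      ∀ᵐ ω ∂μ, (μ[fun ω' => Real.exp (‖δ t ω'‖ ^ 2 / σ ^ 2) | F (t - 1)]) ω ≤ Real.exp 1) :
    ∀ p : ℝ, 0 < p →
      μ {ω | (1 + p) * (∑ t ∈ Finset.Icc 1 (T - 1), w t) * σ ^ 2
              < ∑ t ∈ Finset.Icc 1 (T - 1), w t * ‖δ t ω‖ ^ 2}
        ≤ ENNReal.ofReal (Real.exp (-p)) :=
  weighted_subgaussian_norm_sq_tail_bound_general μ F T δ σ hσ w hw hexp_int hsubg
end

section
/- Lipschitz continuity of the primal best response: the map x*(·) is (L_yx/μ)-Lipschitz on Y, i.e., ‖x*(y) - x*(y')‖ ≤ (L_yx/μ) ‖y - y'‖ for all y, y' ∈ Y. -/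
/-- Convexity for extended-real-valued functions. -/
def EConvexOn {𝕏 : Type*} [NormedAddCommGroup 𝕏] [NormedSpace ℝ 𝕏]
    (s : Set 𝕏) (ψ : 𝕏 → EReal) : Prop :=
  Convex ℝ s ∧ ∀ x ∈ s, ∀ y ∈ s, ∀ a b : ℝ, 0 ≤ a → 0 ≤ b → a + b = 1 →
    ψ (a • x + b • y) ≤ (a : EReal) * ψ x + (b : EReal) * ψ y

/-- Lipschitz continuity of the primal best response
`x*(y) = argmin_{x∈X} [f(x) + g(x) + Φ(x,y)]`: it is `(L_yx/μ)`-Lipschitz on `Y`. -/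
theorem best_response_lipschitz
    {𝕏 𝕐 : Type*} [NormedAddCommGroup 𝕏] [NormedSpace ℝ 𝕏] [FiniteDimensional ℝ 𝕏]
    [NormedAddCommGroup 𝕐] [NormedSpace ℝ 𝕐] [FiniteDimensional ℝ 𝕐]
    (X : Set 𝕏) (Y : Set 𝕐)
    (hXne : X.Nonempty) (hXcl : IsClosed X) (hXconv : Convex ℝ X)
    (hYne : Y.Nonempty) (hYcl : IsClosed Y) (hYconv : Convex ℝ Y)
    (f : 𝕏 → ℝ) (g : 𝕏 → EReal) (Φ : 𝕏 → 𝕐 → ℝ)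
    (μ L_yx : ℝ) (hμ : 0 < μ) (hLyx : 0 ≤ L_yx)
    -- f is differentiable and μ-strongly convex on X
    (Df : 𝕏 → 𝕏 →L[ℝ] ℝ) (hf_deriv : ∀ x ∈ X, HasFDerivAt f (Df x) x)
    (hf_sc : ∀ x ∈ X, ∀ x' ∈ X, ∀ a b : ℝ, 0 ≤ a → 0 ≤ b → a + b = 1 →
      f (a • x + b • x') ≤ a * f x + b * f x' - μ / 2 * a * b * ‖x - x'‖ ^ 2)
    -- g is convex, closed, proper with dom g ∩ X ≠ ∅
    (hg_conv : EConvexOn Set.univ g) (hg_lsc : LowerSemicontinuous g)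
    (hg_nebot : ∀ x, g x ≠ ⊥) (hg_dom : ∃ x ∈ X, g x ≠ ⊤)
    -- Φ is convex in x, concave in y, differentiable in y on Y
    (hΦ_cvx : ∀ y ∈ Y, ConvexOn ℝ X (fun x => Φ x y))
    (hΦ_ccv : ∀ x ∈ X, ConcaveOn ℝ Y (Φ x))
    (DyΦ : 𝕏 → 𝕐 → 𝕐 →L[ℝ] ℝ)
    (hΦ_deriv : ∀ x ∈ X, ∀ y ∈ Y, HasFDerivAt (Φ x) (DyΦ x y) y)
    -- ‖∇_yΦ(x,y) - ∇_yΦ(x',y)‖_* ≤ L_yx ‖x - x'‖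
    (hLip : ∀ x ∈ X, ∀ x' ∈ X, ∀ y ∈ Y, ‖DyΦ x y - DyΦ x' y‖ ≤ L_yx * ‖x - x'‖)
    -- ψᴾ(x,y) := f(x) + g(x) + Φ(x,y) and x*(y) := argmin_{x∈X} ψᴾ(x,y)
    (xstar : 𝕐 → 𝕏)
    (hxstar_mem : ∀ y ∈ Y, xstar y ∈ X)
    (hxstar_min : ∀ y ∈ Y, ∀ x ∈ X,
      ((f (xstar y) : ℝ) : EReal) + g (xstar y) + ((Φ (xstar y) y : ℝ) : EReal)
        ≤ ((f x : ℝ) : EReal) + g x + ((Φ x y : ℝ) : EReal)) :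
    ∀ y ∈ Y, ∀ y' ∈ Y, ‖xstar y - xstar y'‖ ≤ L_yx / μ * ‖y - y'‖ := by
  -- finiteness of g at the minimizers
  obtain ⟨x0, hx0X, hx0⟩ := hg_dom
  have gfin : ∀ y ∈ Y, g (xstar y) ≠ ⊤ := by
    intro y hy htop
    have h := hxstar_min y hy x0 hx0X
    rw [htop] at h
    have hl : ((f (xstar y) : ℝ) : EReal) + ⊤ + ((Φ (xstar y) y : ℝ) : EReal) = ⊤ := by
      rw [EReal.coe_add_top, EReal.top_add_coe]
    rw [hl, top_le_iff] at h
    rw [← EReal.coe_toReal hx0 (hg_nebot x0), ← EReal.coe_add, ← EReal.coe_add] at h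
    exact EReal.coe_ne_top _ h
  -- key strong-minimality inequality
  have key : ∀ y ∈ Y, ∀ z ∈ X, g z ≠ ⊤ →
      f (xstar y) + (g (xstar y)).toReal + Φ (xstar y) y + μ / 2 * ‖xstar y - z‖ ^ 2
        ≤ f z + (g z).toReal + Φ z y := by
    intro y hy z hz hgz
    have hxX := hxstar_mem y hy
    have hgx : ((g (xstar y)).toReal : EReal) = g (xstar y) :=
      EReal.coe_toReal (gfin y hy) (hg_nebot _)
    have step : ∀ t ∈ Set.Ioo (0:ℝ) 1, μ / 2 * (1 - t) * ‖xstar y - z‖ ^ 2 ≤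
        (f z + (g z).toReal + Φ z y) - (f (xstar y) + (g (xstar y)).toReal + Φ (xstar y) y) := by
      intro t ht
      obtain ⟨ht0, ht1⟩ := ht
      have ha : (0:ℝ) ≤ 1 - t := by linarith
      have hab : (1 - t) + t = 1 := by ring
      set w := (1 - t) • (xstar y) + t • z with hw
      have hwX : w ∈ X := hXconv hxX hz ha ht0.le hab
      have hfw := hf_sc (xstar y) hxX z hz (1 - t) t ha ht0.le hab
      have hgw_le : g w ≤ (((1 - t) * (g (xstar y)).toReal + t * (g z).toReal : ℝ) : EReal) := by
        have h := hg_conv.2 (xstar y) trivial z trivial (1 - t) t ha ht0.le hab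
        rw [EReal.coe_add, EReal.coe_mul, EReal.coe_mul, hgx,
          EReal.coe_toReal hgz (hg_nebot z)]
        exact h
      have hgw_top : g w ≠ ⊤ := ne_top_of_le_ne_top (EReal.coe_ne_top _) hgw_le
      have hgwc : ((g w).toReal : EReal) = g w := EReal.coe_toReal hgw_top (hg_nebot w)
      have hgw : (g w).toReal ≤ (1 - t) * (g (xstar y)).toReal + t * (g z).toReal := by
        rw [← EReal.coe_le_coe_iff, hgwc]; exact hgw_le
      have hΦw : Φ w y ≤ (1 - t) * Φ (xstar y) y + t * Φ z y :=
        (hΦ_cvx y hy).2 hxX hz ha ht0.le hab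
      have hmin : f (xstar y) + (g (xstar y)).toReal + Φ (xstar y) y
          ≤ f w + (g w).toReal + Φ w y := by
        have h := hxstar_min y hy w hwX
        rw [← hgx, ← hgwc, ← EReal.coe_add, ← EReal.coe_add, ← EReal.coe_add, ← EReal.coe_add,
          EReal.coe_le_coe_iff] at h
        exact h
      nlinarith [hmin, hfw, hgw, hΦw, ht0, sq_nonneg ‖xstar y - z‖]
    have hT : Filter.Tendsto (fun t : ℝ => μ / 2 * (1 - t) * ‖xstar y - z‖ ^ 2)
        (nhdsWithin 0 (Set.Ioi 0)) (nhds (μ / 2 * (1 - 0) * ‖xstar y - z‖ ^ 2)) := by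
      apply Filter.Tendsto.mono_left _ nhdsWithin_le_nhds
      exact (Continuous.tendsto (by continuity) 0)
    have hmem : Set.Ioo (0:ℝ) 1 ∈ nhdsWithin (0:ℝ) (Set.Ioi 0) :=
      Ioo_mem_nhdsGT_of_mem (by norm_num)
    have hle := le_of_tendsto hT (Filter.eventually_of_mem hmem step)
    simp only [sub_zero, mul_one] at hle
    linarith
  -- main argument
  intro y hy y' hy'
  by_cases hxx : xstar y = xstar y'
  · rw [hxx, sub_self, norm_zero]
    positivity
  · have hc : 0 < ‖xstar y - xstar y'‖ := by
      rw [norm_pos_iff, sub_ne_zero]; exact hxx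
    have hxX := hxstar_mem y hy
    have hx'X := hxstar_mem y' hy'
    have k1 := key y hy (xstar y') hx'X (gfin y' hy')
    have k2 := key y' hy' (xstar y) hxX (gfin y hy)
    rw [norm_sub_rev] at k2
    -- MVT bound on s ↦ Φ(x', γ s) - Φ(x, γ s), γ s = y' + s • (y - y')
    set c := ‖xstar y - xstar y'‖ with hcdef
    set φ : ℝ → ℝ := fun s => Φ (xstar y') (y' + s • (y - y')) - Φ (xstar y) (y' + s • (y - y'))
      with hφ
    set φd : ℝ → ℝ := fun s => DyΦ (xstar y') (y' + s • (y - y')) (y - y')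
      - DyΦ (xstar y) (y' + s • (y - y')) (y - y') with hφd
    have hγmem : ∀ s ∈ Set.Icc (0:ℝ) 1, y' + s • (y - y') ∈ Y := by
      intro s hs
      have h := hYconv hy' hy (by linarith [hs.2] : (0:ℝ) ≤ 1 - s) hs.1 (by ring)
      have he : (1 - s) • y' + s • y = y' + s • (y - y') := by
        rw [sub_smul, one_smul, smul_sub]; abel
      rwa [he] at h
    have hderiv : ∀ s ∈ Set.Icc (0:ℝ) 1, HasDerivWithinAt φ (φd s) (Set.Icc (0:ℝ) 1) s := by
      intro s hs
      have hγd : HasDerivAt (fun s : ℝ => y' + s • (y - y')) (y - y') s := by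
        simpa using ((hasDerivAt_id s).smul_const (y - y')).const_add y'
      have h1 := (hΦ_deriv (xstar y') hx'X _ (hγmem s hs)).comp_hasDerivAt s hγd
      have h2 := (hΦ_deriv (xstar y) hxX _ (hγmem s hs)).comp_hasDerivAt s hγd
      exact (h1.sub h2).hasDerivWithinAt
    have hbound : ∀ s ∈ Set.Icc (0:ℝ) 1, ‖φd s‖ ≤ L_yx * c * ‖y - y'‖ := by
      intro s hs
      have h1 : φd s = (DyΦ (xstar y') (y' + s • (y - y')) - DyΦ (xstar y) (y' + s • (y - y')))
          (y - y') := by simp [hφd]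
      rw [h1]
      calc ‖(DyΦ (xstar y') (y' + s • (y - y')) - DyΦ (xstar y) (y' + s • (y - y'))) (y - y')‖
          ≤ ‖DyΦ (xstar y') (y' + s • (y - y')) - DyΦ (xstar y) (y' + s • (y - y'))‖ * ‖y - y'‖ :=
            ContinuousLinearMap.le_opNorm _ _
        _ ≤ (L_yx * ‖xstar y' - xstar y‖) * ‖y - y'‖ := by
            apply mul_le_mul_of_nonneg_right _ (norm_nonneg _)
            exact hLip (xstar y') hx'X (xstar y) hxX _ (hγmem s hs)
        _ = L_yx * c * ‖y - y'‖ := by rw [norm_sub_rev]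
    have mvt := Convex.norm_image_sub_le_of_norm_hasDerivWithin_le hderiv hbound
      (convex_Icc 0 1) (Set.left_mem_Icc.2 zero_le_one) (Set.right_mem_Icc.2 zero_le_one)
    have hnorm1 : ‖(1:ℝ) - 0‖ = 1 := by norm_num
    rw [hnorm1, mul_one] at mvt
    have hφ1 : φ 1 = Φ (xstar y') y - Φ (xstar y) y := by
      have : y' + (1:ℝ) • (y - y') = y := by rw [one_smul]; abel
      simp [hφ, this]
    have hφ0 : φ 0 = Φ (xstar y') y' - Φ (xstar y) y' := by
      simp [hφ]
    have hsum : μ * c ^ 2 ≤ φ 1 - φ 0 := by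
      rw [hφ1, hφ0]; linarith
    have hfin : μ * c ^ 2 ≤ L_yx * c * ‖y - y'‖ :=
      hsum.trans ((le_abs_self _).trans (by rwa [Real.norm_eq_abs] at mvt))
    rw [div_mul_eq_mul_div, le_div_iff₀ hμ]
    nlinarith [hfin, hc]
end
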